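/- Let G₁, G₂ be finite simple graphs on disjoint vertex sets, let u ∈ V(G₁), v ∈ V(G₂), and let G be the graph obtained from the disjoint union G₁ ⊎ G₂ by adding the edge uv. Then B(G;x,y) = A₁B₂ + A₂B₁ + x(A₁C₂ + A₂C₁) + A₁A₂ + B₁B₂ + B₁C₂ + C₁B₂ + C₁C₂, where for i = 1,2: Aᵢ = Σ x^{|B(S)|}y^{|S|} over S ⊆ V(Gᵢ) containing the marked vertex; Bᵢ = Σ x^{|B(S)|}y^{|S|} over S ⊆ V(Gᵢ) not containing the marked vertex and disjoint from its neighborhood; Cᵢ = Σ x^{|B(S)|}y^{|S|} over S ⊆ V(Gᵢ) not containing the marked vertex but meeting its neighborhood. -/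

import Mathlib

/-! Writing a vertex set of the bridge graph as `S₁ ⊔ S₂`, its boundary is `B(S₁) ⊔ B(S₂)` plus `u`
when `S₁` misses `u` and its neighbourhood while `v ∈ S₂`, and symmetrically plus `v`. So `S₁ ⊔ S₂`
contributes `x^|B(S₁)| y^|S₁| · x^|B(S₂)| y^|S₂|` times the entry of `M` indexed by the classes
(`A`, `B` or `C`) of `S₁` and `S₂`; summing over the pairs gives `(A₁, B₁, C₁) · M · (A₂, B₂, C₂)ᵀ`. -/

open Finset MvPolynomial

attribute [local instance] Classical.propDecidable

/-- The outer boundary of a vertex set `S`. -/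
noncomputable def outerBoundary {V : Type*} [Fintype V] (G : SimpleGraph V) (S : Finset V) :
    Finset V :=
  Finset.univ.filter (fun v => v ∉ S ∧ ∃ u ∈ S, G.Adj u v)

/-- The boundary polynomial `B(G;x,y)` with `x = X 0`, `y = X 1`. -/
noncomputable def boundaryPoly {V : Type*} [Fintype V] (G : SimpleGraph V) :
    MvPolynomial (Fin 2) ℤ :=
  ∑ S : Finset V, X 0 ^ (outerBoundary G S).card * X 1 ^ S.card

/-- Disjoint union of `G₁` and `G₂` together with one additional bridge edge `uv`. -/
def bridgeGraph {V W : Type*} (G : SimpleGraph V) (H : SimpleGraph W) (u : V) (v : W) :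
    SimpleGraph (V ⊕ W) where
  Adj x y := Sum.LiftRel G.Adj H.Adj x y ∨
    (x = Sum.inl u ∧ y = Sum.inr v) ∨ (x = Sum.inr v ∧ y = Sum.inl u)
  symm := ⟨fun x y h => by
    rcases h with h | ⟨a, b⟩ | ⟨a, b⟩
    · cases h with
      | inl h => exact Or.inl (Sum.LiftRel.inl h.symm)
      | inr h => exact Or.inl (Sum.LiftRel.inr h.symm)
    · exact Or.inr (Or.inr ⟨b, a⟩)
    · exact Or.inr (Or.inl ⟨b, a⟩)⟩
  loopless := ⟨fun x h => by
    rcases h with h | ⟨a, b⟩ | ⟨a, b⟩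
    · cases h with
      | inl h => exact h.ne rfl
      | inr h => exact h.ne rfl
    · rw [a] at b; exact Sum.inl_ne_inr b
    · rw [a] at b; exact Sum.inr_ne_inl b⟩

theorem Finset.sum_sum_mul_mul_fiberwise {α β ι κ R : Type*} [CommSemiring R]
    [Fintype ι] [Fintype κ] [DecidableEq ι] [DecidableEq κ]
    (s : Finset α) (t : Finset β) (f : α → ι) (g : β → κ) (a : α → R) (b : β → R)
    (M : ι → κ → R) :
    ∑ x ∈ s, ∑ y ∈ t, a x * b y * M (f x) (g y) =
      ∑ i, ∑ j, (∑ x ∈ s with f x = i, a x) * (∑ y ∈ t with g y = j, b y) * M i j := by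
  calc ∑ x ∈ s, ∑ y ∈ t, a x * b y * M (f x) (g y)
      = ∑ i, ∑ x ∈ s with f x = i, ∑ j, ∑ y ∈ t with g y = j, a x * b y * M i j := by
        rw [← sum_fiberwise s f]
        refine sum_congr rfl fun i _ => sum_congr rfl fun x hx => ?_
        rw [← sum_fiberwise t g]
        refine sum_congr rfl fun j _ => sum_congr rfl fun y hy => ?_
        rw [(mem_filter.mp hx).2, (mem_filter.mp hy).2]
    _ = _ := by
        simp only [sum_mul, mul_sum]
        refine sum_congr rfl fun i _ => ?_
        rw [sum_comm]
        exact sum_congr rfl fun j _ => sum_comm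

section BoundaryPoly

variable {V W : Type*}

noncomputable def boundaryMonomial [Fintype V] (G : SimpleGraph V) (S : Finset V) :
    MvPolynomial (Fin 2) ℤ :=
  X 0 ^ #(outerBoundary G S) * X 1 ^ #S

/-- `0`, `1` or `2` according as `S` is summed in `A`, `B` or `C`. -/
noncomputable def markClass (G : SimpleGraph V) (u : V) (S : Finset V) : Fin 3 :=
  if u ∈ S then 0 else if ∀ w ∈ S, ¬ G.Adj u w then 1 else 2

noncomputable def bridgeMatrix : Matrix (Fin 3) (Fin 3) (MvPolynomial (Fin 2) ℤ) :=
  !![1, X 0, 1; X 0, 1, 1; 1, 1, 1]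

lemma bridgeMatrix_apply (i j : Fin 3) :
    bridgeMatrix i j = if i = 1 ∧ j = 0 ∨ i = 0 ∧ j = 1 then X 0 else 1 := by
  fin_cases i <;> fin_cases j <;> simp [bridgeMatrix]

section MarkClass

variable {G : SimpleGraph V} {u : V} {S : Finset V}

lemma markClass_eq_zero : markClass G u S = 0 ↔ u ∈ S := by
  unfold markClass; split_ifs <;> simp_all

lemma markClass_eq_one : markClass G u S = 1 ↔ u ∉ S ∧ ∀ w ∈ S, ¬ G.Adj u w := by
  unfold markClass; split_ifs <;> simp_all

lemma markClass_eq_two : markClass G u S = 2 ↔ u ∉ S ∧ ∃ w ∈ S, G.Adj u w := by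
  unfold markClass; split_ifs <;> simp_all

variable [Fintype V]

lemma mem_outerBoundary {x : V} : x ∈ outerBoundary G S ↔ x ∉ S ∧ ∃ y ∈ S, G.Adj y x := by
  simp [outerBoundary]

lemma card_insert_outerBoundary_of_notMem (hu : u ∉ S) :
    #(insert u (outerBoundary G S)) = #(outerBoundary G S) + if markClass G u S = 1 then 1 else 0 := by
  have : u ∈ outerBoundary G S ↔ markClass G u S ≠ 1 := by
    simp [mem_outerBoundary, markClass_eq_one, hu, G.adj_comm]
  rw [card_insert_eq_ite]
  split_ifs <;> simp_all

end MarkClass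

section Bridge

variable {G : SimpleGraph V} {H : SimpleGraph W} {u : V} {v : W}

@[simp] lemma bridgeGraph_adj_inl_inl {a b : V} :
    (bridgeGraph G H u v).Adj (.inl a) (.inl b) ↔ G.Adj a b := by
  simp [bridgeGraph]

@[simp] lemma bridgeGraph_adj_inr_inr {a b : W} :
    (bridgeGraph G H u v).Adj (.inr a) (.inr b) ↔ H.Adj a b := by
  simp [bridgeGraph]

@[simp] lemma bridgeGraph_adj_inl_inr {a : V} {b : W} :
    (bridgeGraph G H u v).Adj (.inl a) (.inr b) ↔ a = u ∧ b = v := by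
  simp [bridgeGraph]

@[simp] lemma bridgeGraph_adj_inr_inl {a : V} {b : W} :
    (bridgeGraph G H u v).Adj (.inr b) (.inl a) ↔ a = u ∧ b = v := by
  simp [bridgeGraph, and_comm]

variable [Fintype V] [Fintype W] {S₁ : Finset V} {S₂ : Finset W}

lemma toLeft_outerBoundary_bridgeGraph :
    (outerBoundary (bridgeGraph G H u v) (S₁.disjSum S₂)).toLeft =
      if u ∉ S₁ ∧ v ∈ S₂ then insert u (outerBoundary G S₁) else outerBoundary G S₁ := by
  ext a
  split_ifs with h <;> by_cases ha : a = u <;> simp_all [mem_outerBoundary, Sum.exists]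

lemma toRight_outerBoundary_bridgeGraph :
    (outerBoundary (bridgeGraph G H u v) (S₁.disjSum S₂)).toRight =
      if v ∉ S₂ ∧ u ∈ S₁ then insert v (outerBoundary H S₂) else outerBoundary H S₂ := by
  ext b
  split_ifs with h <;> by_cases hb : b = v <;> simp_all [mem_outerBoundary, Sum.exists]

lemma card_outerBoundary_bridgeGraph :
    #(outerBoundary (bridgeGraph G H u v) (S₁.disjSum S₂)) =
      #(outerBoundary G S₁) + #(outerBoundary H S₂) +
        if markClass G u S₁ = 1 ∧ markClass H v S₂ = 0 ∨
          markClass G u S₁ = 0 ∧ markClass H v S₂ = 1 then 1 else 0 := by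
  rw [← card_toLeft_add_card_toRight, toLeft_outerBoundary_bridgeGraph,
    toRight_outerBoundary_bridgeGraph]
  split_ifs <;>
    grind [card_insert_outerBoundary_of_notMem, markClass_eq_zero, markClass_eq_one]

lemma boundaryMonomial_bridgeGraph_disjSum :
    boundaryMonomial (bridgeGraph G H u v) (S₁.disjSum S₂) =
      boundaryMonomial G S₁ * boundaryMonomial H S₂ *
        bridgeMatrix (markClass G u S₁) (markClass H v S₂) := by
  rw [boundaryMonomial, card_outerBoundary_bridgeGraph, card_disjSum, bridgeMatrix_apply]
  split_ifs <;> simp only [boundaryMonomial, pow_add] <;> ring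

variable (G H u v)

lemma boundaryPoly_bridgeGraph_eq_sum_bridgeMatrix :
    boundaryPoly (bridgeGraph G H u v) =
      ∑ i, ∑ j, (∑ S ∈ univ with markClass G u S = i, boundaryMonomial G S) *
        (∑ S ∈ univ with markClass H v S = j, boundaryMonomial H S) * bridgeMatrix i j := by
  calc boundaryPoly (bridgeGraph G H u v)
      = ∑ S₁ : Finset V, ∑ S₂ : Finset W,
          boundaryMonomial (bridgeGraph G H u v) (S₁.disjSum S₂) := by
        rw [boundaryPoly, ← sumEquiv.symm.toEquiv.sum_comp, Fintype.sum_prod_type]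
        simp only [RelIso.coe_fn_toEquiv, sumEquiv_symm_apply, boundaryMonomial]
    _ = ∑ S₁ : Finset V, ∑ S₂ : Finset W, boundaryMonomial G S₁ * boundaryMonomial H S₂ *
          bridgeMatrix (markClass G u S₁) (markClass H v S₂) := by
        simp only [boundaryMonomial_bridgeGraph_disjSum]
    _ = _ := sum_sum_mul_mul_fiberwise ..

end Bridge

end BoundaryPoly

/-- Boundary polynomial of two graphs joined by a single bridge edge, in the
matrix form `(A₁, B₁, C₁) · [[1,x,1],[x,1,1],[1,1,1]] · (A₂, B₂, C₂)ᵀ`. -/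
theorem boundaryPoly_bridge {V W : Type*} [Fintype V] [Fintype W]
    (G : SimpleGraph V) (H : SimpleGraph W) (u : V) (v : W) :
    boundaryPoly (bridgeGraph G H u v) =
      (fun (A₁ B₁ C₁ A₂ B₂ C₂ : MvPolynomial (Fin 2) ℤ) =>
        A₁ * A₂ + X 0 * (A₁ * B₂) + A₁ * C₂
        + X 0 * (B₁ * A₂) + B₁ * B₂ + B₁ * C₂
        + C₁ * A₂ + C₁ * B₂ + C₁ * C₂)
      (∑ S ∈ Finset.univ.filter (fun S : Finset V => u ∈ S),
        X 0 ^ (outerBoundary G S).card * X 1 ^ S.card)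
      (∑ S ∈ Finset.univ.filter (fun S : Finset V =>
          u ∉ S ∧ ∀ w ∈ S, ¬ G.Adj u w),
        X 0 ^ (outerBoundary G S).card * X 1 ^ S.card)
      (∑ S ∈ Finset.univ.filter (fun S : Finset V =>
          u ∉ S ∧ ∃ w ∈ S, G.Adj u w),
        X 0 ^ (outerBoundary G S).card * X 1 ^ S.card)
      (∑ S ∈ Finset.univ.filter (fun S : Finset W => v ∈ S),
        X 0 ^ (outerBoundary H S).card * X 1 ^ S.card)
      (∑ S ∈ Finset.univ.filter (fun S : Finset W =>
          v ∉ S ∧ ∀ w ∈ S, ¬ H.Adj v w),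
        X 0 ^ (outerBoundary H S).card * X 1 ^ S.card)
      (∑ S ∈ Finset.univ.filter (fun S : Finset W =>
          v ∉ S ∧ ∃ w ∈ S, H.Adj v w),
        X 0 ^ (outerBoundary H S).card * X 1 ^ S.card) := by
  rw [boundaryPoly_bridgeGraph_eq_sum_bridgeMatrix]
  simp only [Fin.sum_univ_three, markClass_eq_zero, markClass_eq_one, markClass_eq_two,
    boundaryMonomial, bridgeMatrix, Matrix.of_apply, Matrix.cons_val', Matrix.cons_val_zero,
    Matrix.cons_val_one, Matrix.cons_val, Matrix.cons_val_fin_one, mul_one]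
  ring
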